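/- Let M > 0, δ₀ > 0, l₀ ∈ ℝ, and let w₀ ∈ L^∞((−∞, l₀]) satisfy w₀(x) = 0 for all sufficiently large negative x. Let w be the bounded classical solution of the problem w_t = w_xx − M (w_x)² for x < l₀, t > 0, with w(x,0) = w₀(x) for x ≤ l₀ and w(l₀, t) = δ₀ for t ≥ 0. Then w(x,t) → δ₀ as t → ∞, locally uniformly in x ∈ (−∞, l₀]. -/

import Mathlib

open Filter Topology Set MeasureTheory

noncomputable section

/-- `u` satisfies `u_t = u_xx + f(t,u)` for `x ∈ sx`, `t ∈ st`
(with the required differentiability in space and time). -/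
def SatPDE (f u : ℝ → ℝ → ℝ) (sx st : Set ℝ) : Prop :=
  ∀ x ∈ sx, ∀ t ∈ st,
    DifferentiableAt ℝ (fun y => u y t) x ∧
    DifferentiableAt ℝ (deriv fun y => u y t) x ∧
    HasDerivAt (fun τ => u x τ) (deriv (deriv fun y => u y t) x + f t (u x t)) t

/-- entire solution of `U_t = U_xx + f(t,U)` on `ℝ × ℝ`. -/
def EntireSol (f U : ℝ → ℝ → ℝ) : Prop := SatPDE f U Set.univ Set.univ

/-- classical (for `t > 0`) solution of the Cauchy problem with initial datum `u₀`. -/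
def CauchySol (f : ℝ → ℝ → ℝ) (u₀ : ℝ → ℝ) (u : ℝ → ℝ → ℝ) : Prop :=
  SatPDE f u Set.univ (Set.Ioi 0) ∧
  ContinuousOn (fun q : ℝ × ℝ => u q.1 q.2) (Set.univ ×ˢ Set.Ioi 0) ∧
  ∀ x, u x 0 = u₀ x

/-- `U` is `T`-periodic in time. -/
def TPer (T : ℝ) (U : ℝ → ℝ → ℝ) : Prop := ∀ x t, U x (t + T) = U x t

/-- `U` is spatially constant. -/
def SpatConst (U : ℝ → ℝ → ℝ) : Prop := ∀ x y t, U x t = U y t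

/-- `U` is symmetrically decreasing with respect to `x₀`. -/
def SymDecr (U : ℝ → ℝ → ℝ) (x₀ : ℝ) : Prop :=
  (∀ x t, U (2 * x₀ - x) t = U x t) ∧ ∀ x t : ℝ, x₀ < x → deriv (fun y => U y t) x < 0

/-- `v` is symmetric with respect to `x₀` and nonincreasing away from `x₀`. -/
def SymNonincr (v : ℝ → ℝ → ℝ) (x₀ : ℝ) : Prop :=
  (∀ x t, v (2 * x₀ - x) t = v x t) ∧
  (∀ x t : ℝ, x < x₀ → 0 ≤ deriv (fun y => v y t) x) ∧
  (∀ x t : ℝ, x₀ < x → deriv (fun y => v y t) x ≤ 0)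

/-- `g` solves the ODE `g' = f(t, g)` on the set `s`. -/
def ODESolOn (f : ℝ → ℝ → ℝ) (g : ℝ → ℝ) (s : Set ℝ) : Prop :=
  ∀ t ∈ s, HasDerivAt g (f t (g t)) t

/-- `p` is a nonnegative `T`-periodic solution of `p' = f(t,p)`. -/
def XPer (T : ℝ) (f : ℝ → ℝ → ℝ) (p : ℝ → ℝ) : Prop :=
  (∀ t, 0 ≤ p t) ∧ (∀ t, p (t + T) = p t) ∧ ODESolOn f p Set.univ

/-- `p` is the base of `U`, i.e. `U(x,t) → p(t)` as `|x| → ∞`. -/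
def HasBase (U : ℝ → ℝ → ℝ) (p : ℝ → ℝ) : Prop :=
  ∀ t, Tendsto (fun x => U x t) atTop (nhds (p t)) ∧
    Tendsto (fun x => U x t) atBot (nhds (p t))

/-- `U` is an ω-limit solution of `u`: an entire solution which is the locally uniform
limit of `u(x, t + kⱼ T)` for some sequence of positive integers `kⱼ → ∞`. -/
def OmegaLimitSol (T : ℝ) (f u U : ℝ → ℝ → ℝ) : Prop :=
  EntireSol f U ∧
  ∃ k : ℕ → ℕ, StrictMono k ∧ (∀ j, 0 < k j) ∧
    TendstoLocallyUniformly
      (fun j (q : ℝ × ℝ) => u q.1 (q.2 + (k j : ℝ) * T)) (fun q => U q.1 q.2) atTop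

/-- `φ` is an ω-limit point of `u`: `u(·, kⱼ T) → φ` in `L^∞_loc(ℝ)`. -/
def OmegaLimitPt (T : ℝ) (u : ℝ → ℝ → ℝ) (φ : ℝ → ℝ) : Prop :=
  ∃ k : ℕ → ℕ, StrictMono k ∧ (∀ j, 0 < k j) ∧
    TendstoLocallyUniformly (fun j x => u x ((k j : ℝ) * T)) φ atTop

/-- the solution `h(·;a)` of `h' = f(t,h)`, `h(0) = a`, is `T`-monotone nondecreasing
(formulated for every solution with initial value `a`; the solution is unique). -/
def TMonNondecFrom (T : ℝ) (f : ℝ → ℝ → ℝ) (a : ℝ) : Prop :=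
  ∀ g : ℝ → ℝ, ODESolOn f g (Set.Ici 0) → g 0 = a → ∀ t : ℝ, 0 ≤ t → g t ≤ g (t + T)

/-- the solution `h(·;a)` is `T`-monotone decreasing. -/
def TMonDecFrom (T : ℝ) (f : ℝ → ℝ → ℝ) (a : ℝ) : Prop :=
  ∀ g : ℝ → ℝ, ODESolOn f g (Set.Ici 0) → g 0 = a → ∀ t : ℝ, 0 ≤ t → g (t + T) < g t

/-- the solution `h(·;a)` is `T`-monotone nonincreasing. -/
def TMonNonincFrom (T : ℝ) (f : ℝ → ℝ → ℝ) (a : ℝ) : Prop :=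
  ∀ g : ℝ → ℝ, ODESolOn f g (Set.Ici 0) → g 0 = a → ∀ t : ℝ, 0 ≤ t → g (t + T) ≤ g t

/-- `p ∈ Y_per`. -/
def YPer (T : ℝ) (f : ℝ → ℝ → ℝ) (p : ℝ → ℝ) : Prop :=
  XPer T f p ∧ ∃ ε > 0, ∀ a ∈ Set.Ioo (p 0) (p 0 + ε), TMonNondecFrom T f a

/-- `p` is linearly stable: `∫₀ᵀ ∂ᵤf(t, p(t)) dt < 0`. -/
def LinStable (T : ℝ) (f : ℝ → ℝ → ℝ) (p : ℝ → ℝ) : Prop :=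
  (∫ t in (0:ℝ)..T, deriv (f t) (p t)) < 0

/-- `p` is stable from above for the ODE `h' = f(t,h)`. -/
def StableFromAbove (f : ℝ → ℝ → ℝ) (p : ℝ → ℝ) : Prop :=
  ∀ ε > 0, ∃ δ > 0, ∀ a ∈ Set.Icc (p 0) (p 0 + δ),
    ∀ g : ℝ → ℝ, ODESolOn f g (Set.Ici 0) → g 0 = a → ∀ t : ℝ, 0 ≤ t → |g t - p t| ≤ ε

/-- `p` is stable from below for the ODE `h' = f(t,h)`. -/
def StableFromBelow (f : ℝ → ℝ → ℝ) (p : ℝ → ℝ) : Prop :=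
  ∀ ε > 0, ∃ δ > 0, ∀ a ∈ Set.Icc (p 0 - δ) (p 0),
    ∀ g : ℝ → ℝ, ODESolOn f g (Set.Ici 0) → g 0 = a → ∀ t : ℝ, 0 ≤ t → |g t - p t| ≤ ε

/-- `Zsc w`: the number of sign changes of `w` on `ℝ` (a value in `ℕ∞`). -/
def Zsc (w : ℝ → ℝ) : ℕ∞ :=
  ⨆ k ∈ {k : ℕ | ∃ x : Fin (k + 1) → ℝ, StrictMono x ∧
      ∀ i : Fin k, w (x i.castSucc) * w (x i.succ) < 0}, (k : ℕ∞)

/-!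
The Hopf–Cole transform `ψ = exp (-M w)` turns the equation into the heat equation, with boundary
value `b = exp (-M δ₀)`. The difference `u = ψ - b` is compared with the self-similar barrier
`A · √π erf ((l₀ + 1 - x) / (2 √t))`, which dominates `sup |u|` at `t = 1` and is nonnegative on
`x = l₀`. The maximum principle on the half-line holds for merely bounded solutions, because
subtracting the strict supersolution `ε ((x - l₀)² + 3 t)` confines the maximum to a bounded
rectangle. Hence `|ψ - b| = O ((l₀ + 1 - x) / √t)`, and this transfers back to `w` since `exp` is
bi-Lipschitz on bounded sets.
-/

theorem IsLocalMax.hasDerivAt_hasDerivAt_nonpos {f f' : ℝ → ℝ} {a c : ℝ} (hmax : IsLocalMax f a)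
    (hf : ∀ᶠ y in 𝓝 a, HasDerivAt f (f' y) y) (hf' : HasDerivAt f' c a) : c ≤ 0 := by
  by_contra! hc
  have hf'a : f' a = 0 := hmax.hasDerivAt_eq_zero hf.self_of_nhds
  have hpos : ∀ᶠ y in 𝓝[>] a, 0 < f' y := by
    have hslope := (hasDerivAt_iff_tendsto_slope.mp hf').mono_left (nhdsGT_le_nhdsNE a)
    filter_upwards [hslope.eventually (lt_mem_nhds hc), self_mem_nhdsWithin] with y hy hya
    rw [slope_def_field, hf'a, sub_zero] at hy
    exact (div_pos_iff_of_pos_right (sub_pos.2 hya)).1 hy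
  obtain ⟨b, hab, hgood⟩ := mem_nhdsGT_iff_exists_Ioc_subset.1
    (hpos.and (nhdsWithin_le_nhds (hf.and hmax)))
  have hcont : ContinuousOn f (Icc a b) := fun y hy =>
    (hy.1.eq_or_lt.elim (fun h => h ▸ hf.self_of_nhds)
      (fun h => (hgood ⟨h, hy.2⟩).2.1)).continuousAt.continuousWithinAt
  obtain ⟨ξ, hξ, hslope⟩ :=
    exists_hasDerivAt_eq_slope f f' hab hcont fun y hy => (hgood (Ioo_subset_Ioc_self hy)).2.1
  have hξpos : 0 < (f b - f a) / (b - a) := hslope ▸ (hgood (Ioo_subset_Ioc_self hξ)).1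
  have hfb : f b ≤ f a := (hgood ⟨hab, le_rfl⟩).2.2
  exact (div_pos_iff_of_pos_right (sub_pos.2 hab)).1 hξpos |>.not_ge (sub_nonpos.2 hfb)

theorem IsMaxOn.hasDerivAt_nonneg_of_Icc {g : ℝ → ℝ} {a b c : ℝ}
    (hmax : IsMaxOn g (Icc a b) b) (hg : HasDerivAt g c b) (hab : a < b) : 0 ≤ c := by
  have hcone : a - b ∈ posTangentConeAt (Icc a b) b :=
    sub_mem_posTangentConeAt_of_segment_subset
      ((convex_Icc a b).segment_subset (right_mem_Icc.2 hab.le) (left_mem_Icc.2 hab.le))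
  have := hmax.localize.hasFDerivWithinAt_nonpos hg.hasFDerivAt.hasFDerivWithinAt hcone
  rw [ContinuousLinearMap.toSpanSingleton_apply, smul_eq_mul] at this
  nlinarith

/-- `u_t = u_xx` on `s × T`, with `ux`, `uxx` the spatial derivatives at time `t`; `s` should be
open for `uxx` to be a genuine second derivative. -/
def IsHeatSolutionOn (u : ℝ → ℝ → ℝ) (s T : Set ℝ) : Prop :=
  ∀ t ∈ T, ∃ ux uxx : ℝ → ℝ, ∀ x ∈ s,
    HasDerivAt (u · t) (ux x) x ∧ HasDerivAt ux (uxx x) x ∧ HasDerivAt (u x ·) (uxx x) t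

def IsStrictHeatSubsolutionOn (u : ℝ → ℝ → ℝ) (s T : Set ℝ) : Prop :=
  ∀ t ∈ T, ∃ ux uxx : ℝ → ℝ, ∀ x ∈ s,
    HasDerivAt (u · t) (ux x) x ∧ HasDerivAt ux (uxx x) x ∧
      ∃ ut < uxx x, HasDerivAt (u x ·) ut t

namespace IsHeatSolutionOn

variable {u v : ℝ → ℝ → ℝ} {s s' T T' : Set ℝ}

theorem mono (hu : IsHeatSolutionOn u s T) (hs : s' ⊆ s) (hT : T' ⊆ T) :
    IsHeatSolutionOn u s' T' := fun t ht =>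
  (hu t (hT ht)).imp fun _ ⟨uxx, h⟩ => ⟨uxx, fun x hx => h x (hs hx)⟩

theorem const_mul (hu : IsHeatSolutionOn u s T) (a : ℝ) :
    IsHeatSolutionOn (fun x t => a * u x t) s T := fun t ht => by
  obtain ⟨ux, uxx, h⟩ := hu t ht
  exact ⟨fun x => a * ux x, fun x => a * uxx x, fun x hx =>
    ⟨(h x hx).1.const_mul a, (h x hx).2.1.const_mul a, (h x hx).2.2.const_mul a⟩⟩

theorem sub (hu : IsHeatSolutionOn u s T) (hv : IsHeatSolutionOn v s T) :
    IsHeatSolutionOn (fun x t => u x t - v x t) s T := fun t ht => by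
  obtain ⟨ux, uxx, hu⟩ := hu t ht
  obtain ⟨vx, vxx, hv⟩ := hv t ht
  exact ⟨fun x => ux x - vx x, fun x => uxx x - vxx x, fun x hx =>
    ⟨(hu x hx).1.sub (hv x hx).1, (hu x hx).2.1.sub (hv x hx).2.1,
      (hu x hx).2.2.sub (hv x hx).2.2⟩⟩

theorem neg (hu : IsHeatSolutionOn u s T) : IsHeatSolutionOn (fun x t => -u x t) s T := by
  simpa using hu.const_mul (-1)

/-- The penalty `ε ((x - c)² + 3 (t - t₀) + 1)` satisfies `p_t - p_xx = ε > 0`. -/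
theorem isStrictHeatSubsolutionOn_sub_penalty (hu : IsHeatSolutionOn u s T) {ε : ℝ}
    (hε : 0 < ε) (c t₀ : ℝ) :
    IsStrictHeatSubsolutionOn (fun x t => u x t - ε * ((x - c) ^ 2 + 3 * (t - t₀) + 1)) s T :=
  fun t ht => by
  obtain ⟨ux, uxx, h⟩ := hu t ht
  refine ⟨fun x => ux x - ε * (2 * (x - c)), fun x => uxx x - 2 * ε, fun x hx =>
    ⟨(h x hx).1.sub ?_, (h x hx).2.1.sub ?_, uxx x - 3 * ε, by linarith,
      (h x hx).2.2.sub ?_⟩⟩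
  · simpa [add_assoc] using
      ((((hasDerivAt_id x).sub_const c).pow 2).add_const (3 * (t - t₀) + 1)).const_mul ε
  · simpa [mul_comm] using (((hasDerivAt_id x).sub_const c).const_mul 2).const_mul ε
  · simpa [mul_comm] using
      (((((hasDerivAt_id t).sub_const t₀).const_mul 3).const_add _).add_const 1).const_mul ε

end IsHeatSolutionOn

theorem isHeatSolutionOn_const (a : ℝ) (s T : Set ℝ) : IsHeatSolutionOn (fun _ _ => a) s T :=
  fun _ _ => ⟨fun _ => 0, fun _ => 0, fun _ _ =>
    ⟨hasDerivAt_const _ _, hasDerivAt_const _ _, hasDerivAt_const _ _⟩⟩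

theorem IsStrictHeatSubsolutionOn.nonpos_of_parabolicBoundary {w : ℝ → ℝ → ℝ}
    {a l t₀ t₁ : ℝ}
    (hw : IsStrictHeatSubsolutionOn w (Ioo a l) (Ioc t₀ t₁))
    (hcont : ContinuousOn (fun q : ℝ × ℝ => w q.1 q.2) (Icc a l ×ˢ Icc t₀ t₁))
    (hleft : ∀ t ∈ Icc t₀ t₁, w a t ≤ 0) (hright : ∀ t ∈ Icc t₀ t₁, w l t ≤ 0)
    (hinit : ∀ x ∈ Icc a l, w x t₀ ≤ 0) :
    ∀ x ∈ Icc a l, ∀ t ∈ Icc t₀ t₁, w x t ≤ 0 := by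
  intro x hx t ht
  obtain ⟨⟨xm, tm⟩, ⟨hxm, htm⟩, hmax⟩ :=
    (isCompact_Icc.prod isCompact_Icc).exists_isMaxOn ⟨(x, t), hx, ht⟩ hcont
  have hmax' : ∀ y ∈ Icc a l, ∀ τ ∈ Icc t₀ t₁, w y τ ≤ w xm tm := fun y hy τ hτ =>
    hmax (mk_mem_prod hy hτ)
  refine (hmax' x hx t ht).trans (not_lt.1 fun hpos => ?_)
  have hxa : a < xm := hxm.1.lt_of_ne (by rintro rfl; linarith [hleft tm htm])
  have hxl : xm < l := hxm.2.lt_of_ne (by rintro rfl; linarith [hright tm htm])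
  have ht₀ : t₀ < tm := htm.1.lt_of_ne (by rintro rfl; linarith [hinit xm hxm])
  obtain ⟨wx, wxx, hderiv⟩ := hw tm ⟨ht₀, htm.2⟩
  obtain ⟨-, hwxx, wt, hwt, hwt'⟩ := hderiv xm ⟨hxa, hxl⟩
  have hspace : wxx xm ≤ 0 := by
    refine IsLocalMax.hasDerivAt_hasDerivAt_nonpos (f := (w · tm)) ?_ ?_ hwxx
    · filter_upwards [Ioo_mem_nhds hxa hxl] with y hy
      exact hmax' y (Ioo_subset_Icc_self hy) tm htm
    · filter_upwards [Ioo_mem_nhds hxa hxl] with y hy using (hderiv y hy).1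
  have htime : 0 ≤ wt := IsMaxOn.hasDerivAt_nonneg_of_Icc
    (fun τ hτ => hmax' xm hxm τ ⟨hτ.1, hτ.2.trans htm.2⟩) hwt' ht₀
  linarith

theorem IsHeatSolutionOn.nonpos_of_halfLine {v : ℝ → ℝ → ℝ} {l t₀ C : ℝ}
    (hv : IsHeatSolutionOn v (Iio l) (Ioi t₀))
    (hcont : ContinuousOn (fun q : ℝ × ℝ => v q.1 q.2) (Iic l ×ˢ Ici t₀))
    (hbdd : ∀ x ≤ l, ∀ t ≥ t₀, v x t ≤ C) (hbc : ∀ t ≥ t₀, v l t ≤ 0)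
    (hinit : ∀ x ≤ l, v x t₀ ≤ 0) :
    ∀ x ≤ l, ∀ t ≥ t₀, v x t ≤ 0 := by
  intro x hx t ht
  set P : ℝ → ℝ → ℝ := fun y τ => (y - l) ^ 2 + 3 * (τ - t₀) + 1
  have hP : ∀ y, ∀ τ ≥ t₀, 1 ≤ P y τ := fun y τ hτ => by
    simp only [P]; nlinarith [sq_nonneg (y - l)]
  suffices h : ∀ ε > 0, v x t ≤ ε * P x t by
    refine le_of_forall_pos_le_add fun δ hδ => ?_
    have hPpos : 0 < P x t := one_pos.trans_le (hP x t ht)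
    simpa [div_mul_cancel₀ _ hPpos.ne'] using h (δ / P x t) (div_pos hδ hPpos)
  intro ε hε
  -- far enough to the left the penalty exceeds the bound `C`
  set a := min x (l - √(|C| / ε))
  have hfar : C ≤ ε * (a - l) ^ 2 := by
    have hR : √(|C| / ε) ≤ l - a := by
      simp only [a]; linarith [min_le_right x (l - √(|C| / ε))]
    calc C ≤ ε * √(|C| / ε) ^ 2 := by
          rw [Real.sq_sqrt (by positivity), mul_div_cancel₀ _ hε.ne']; exact le_abs_self C
      _ ≤ ε * (a - l) ^ 2 := by rw [← neg_sub, neg_sq]; gcongr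
  have hv' : IsHeatSolutionOn v (Ioo a l) (Ioc t₀ t) :=
    hv.mono Ioo_subset_Iio_self Ioc_subset_Ioi_self
  have hw := hv'.isStrictHeatSubsolutionOn_sub_penalty hε l t₀
  have := hw.nonpos_of_parabolicBoundary (w := fun y τ => v y τ - ε * P y τ) ?_ ?_ ?_ ?_
    x ⟨min_le_left _ _, hx⟩ t ⟨ht, le_rfl⟩
  · linarith
  · refine (hcont.mono ?_).sub (continuousOn_const.mul (by fun_prop))
    exact prod_mono Icc_subset_Iic_self Icc_subset_Ici_self
  · intro τ hτ
    have := hbdd a (min_le_left _ _ |>.trans hx) τ hτ.1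
    simp only [P]; nlinarith [hτ.1]
  · intro τ hτ
    have := hbc τ hτ.1
    nlinarith [hP l τ hτ.1]
  · intro y hy
    have := hinit y hy.2
    nlinarith [hP y t₀ le_rfl]

/-- `scaledErf z = √π · erf (z / 2)`. -/
def scaledErf (z : ℝ) : ℝ := ∫ s in (0 : ℝ)..z, Real.exp (-s ^ 2 / 4)

theorem continuous_exp_neg_sq_div_four : Continuous fun s : ℝ => Real.exp (-s ^ 2 / 4) := by
  fun_prop

theorem hasDerivAt_scaledErf (z : ℝ) : HasDerivAt scaledErf (Real.exp (-z ^ 2 / 4)) z :=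
  (continuous_exp_neg_sq_div_four.integral_hasStrictDerivAt 0 z).hasDerivAt

theorem continuous_scaledErf : Continuous scaledErf :=
  continuous_iff_continuousAt.2 fun z => (hasDerivAt_scaledErf z).continuousAt

theorem monotone_scaledErf : Monotone scaledErf :=
  monotone_of_deriv_nonneg (fun z => (hasDerivAt_scaledErf z).differentiableAt) fun z => by
    rw [(hasDerivAt_scaledErf z).deriv]; positivity

theorem scaledErf_nonneg {z : ℝ} (hz : 0 ≤ z) : 0 ≤ scaledErf z := by
  simpa [scaledErf] using monotone_scaledErf hz

theorem scaledErf_one_pos : 0 < scaledErf 1 :=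
  intervalIntegral.intervalIntegral_pos_of_pos
    (continuous_exp_neg_sq_div_four.intervalIntegrable 0 1) (fun _ => Real.exp_pos _) one_pos

theorem scaledErf_le_self {z : ℝ} (hz : 0 ≤ z) : scaledErf z ≤ z := by
  have : scaledErf z ≤ ∫ _ in (0 : ℝ)..z, (1 : ℝ) :=
    intervalIntegral.integral_mono_on hz (continuous_exp_neg_sq_div_four.intervalIntegrable 0 z)
      intervalIntegrable_const fun s _ => by rw [Real.exp_le_one_iff]; nlinarith [sq_nonneg s]
  simpa using this

def erfBarrier (l x t : ℝ) : ℝ := scaledErf ((l - x) / √t)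

theorem isHeatSolutionOn_erfBarrier (l : ℝ) : IsHeatSolutionOn (erfBarrier l) univ (Ioi 0) := by
  intro t ht
  have hs : √t ≠ 0 := (Real.sqrt_pos.2 ht).ne'
  set z : ℝ → ℝ := fun x => (l - x) / √t
  have hz : ∀ x, HasDerivAt z (-(√t)⁻¹) x := fun x => by
    simpa [z, div_eq_mul_inv] using ((hasDerivAt_id x).const_sub l).mul_const (√t)⁻¹
  refine ⟨fun x => -Real.exp (-z x ^ 2 / 4) / √t,
    fun x => -(z x * Real.exp (-z x ^ 2 / 4) / (2 * √t ^ 2)), fun x _ => ⟨?_, ?_, ?_⟩⟩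
  · exact ((hasDerivAt_scaledErf (z x)).comp x (hz x)).congr_deriv (by ring)
  · refine (((hz x).pow 2).neg.div_const 4).exp.neg.div_const √t |>.congr_deriv ?_
    simp only [Pi.neg_apply, Pi.pow_apply]
    field_simp
    ring
  · have hzt : HasDerivAt (fun τ => (l - x) / √τ) (-((l - x) / √t) / (2 * √t ^ 2)) t :=
      (((Real.hasDerivAt_sqrt ht.ne').inv hs).const_mul (l - x)).congr_deriv (by field_simp)
    exact ((hasDerivAt_scaledErf _).comp t hzt).congr_deriv (by ring)

theorem continuousOn_erfBarrier (l : ℝ) :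
    ContinuousOn (fun q : ℝ × ℝ => erfBarrier l q.1 q.2) (univ ×ˢ Ioi 0) :=
  continuous_scaledErf.comp_continuousOn <| (continuous_const.sub continuous_fst).continuousOn.div
    (by fun_prop) fun q hq => (Real.sqrt_pos.2 hq.2).ne'

namespace IsHeatSolutionOn

variable {u : ℝ → ℝ → ℝ} {l C : ℝ}

/-- Comparison with `C / scaledErf 1 · erfBarrier (l + 1)`, which dominates `C` at `t = 1`
and is nonnegative on `x = l`. -/
theorem le_of_halfLine (hu : IsHeatSolutionOn u (Iio l) (Ioi 1))
    (hcont : ContinuousOn (fun q : ℝ × ℝ => u q.1 q.2) (Iic l ×ˢ Ici 1)) (hC : 0 ≤ C)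
    (hbdd : ∀ x ≤ l, ∀ t ≥ 1, u x t ≤ C) (hbc : ∀ t ≥ 1, u l t ≤ 0) :
    ∀ x ≤ l, ∀ t ≥ 1, u x t ≤ C / scaledErf 1 * ((l + 1 - x) / √t) := by
  set A := C / scaledErf 1
  have hA : 0 ≤ A := div_nonneg hC scaledErf_one_pos.le
  have hG : ∀ x ≤ l, ∀ t, 0 ≤ A * erfBarrier (l + 1) x t := fun x hx t =>
    mul_nonneg hA (scaledErf_nonneg (div_nonneg (by linarith) (Real.sqrt_nonneg t)))
  have hcomp := (hu.sub ((isHeatSolutionOn_erfBarrier (l + 1)).const_mul A |>.mono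
    (subset_univ _) (Ioi_subset_Ioi zero_le_one))).nonpos_of_halfLine (C := C)
    (hcont.sub (continuousOn_const.mul ((continuousOn_erfBarrier (l + 1)).mono
      (prod_mono (subset_univ _) (Ici_subset_Ioi.2 one_pos))))) ?_ ?_ ?_
  · intro x hx t ht
    have hz : 0 ≤ (l + 1 - x) / √t := div_nonneg (by linarith) (Real.sqrt_nonneg t)
    calc u x t ≤ A * erfBarrier (l + 1) x t := sub_nonpos.1 (hcomp x hx t ht)
      _ ≤ A * ((l + 1 - x) / √t) := mul_le_mul_of_nonneg_left (scaledErf_le_self hz) hA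
  · exact fun x hx t ht => (sub_le_self _ (hG x hx t)).trans (hbdd x hx t ht)
  · exact fun t ht => (sub_le_self _ (hG l le_rfl t)).trans (hbc t ht)
  · intro x hx
    have hA1 : A * scaledErf 1 = C := div_mul_cancel₀ C scaledErf_one_pos.ne'
    have : scaledErf 1 ≤ erfBarrier (l + 1) x 1 :=
      monotone_scaledErf (by simp only [Real.sqrt_one, div_one]; linarith)
    nlinarith [hbdd x hx 1 le_rfl]

theorem abs_le_of_halfLine (hu : IsHeatSolutionOn u (Iio l) (Ioi 1))
    (hcont : ContinuousOn (fun q : ℝ × ℝ => u q.1 q.2) (Iic l ×ˢ Ici 1))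
    (hbdd : ∀ x ≤ l, ∀ t ≥ 1, |u x t| ≤ C) (hbc : ∀ t ≥ 1, u l t = 0) :
    ∀ x ≤ l, ∀ t ≥ 1, |u x t| ≤ C / scaledErf 1 * ((l + 1 - x) / √t) := by
  have hC : 0 ≤ C := (abs_nonneg _).trans (hbdd l le_rfl 1 le_rfl)
  intro x hx t ht
  refine abs_le'.2
    ⟨hu.le_of_halfLine hcont hC (fun y hy τ hτ => (abs_le.1 (hbdd y hy τ hτ)).2)
      (fun τ hτ => (hbc τ hτ).le) x hx t ht, ?_⟩
  exact hu.neg.le_of_halfLine hcont.neg hC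
    (fun y hy τ hτ => neg_le.1 (abs_le.1 (hbdd y hy τ hτ)).1)
    (fun τ hτ => by simp [hbc τ hτ]) x hx t ht

end IsHeatSolutionOn

theorem isHeatSolutionOn_exp_neg_mul {w : ℝ → ℝ → ℝ} {M : ℝ} {s T : Set ℝ}
    (hw : ∀ x ∈ s, ∀ t ∈ T,
      DifferentiableAt ℝ (fun y => w y t) x ∧
      DifferentiableAt ℝ (deriv fun y => w y t) x ∧
      HasDerivAt (fun τ => w x τ)
        (deriv (deriv fun y => w y t) x - M * (deriv (fun y => w y t) x) ^ 2) t) :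
    IsHeatSolutionOn (fun x t => Real.exp (-(M * w x t))) s T := by
  intro t ht
  refine ⟨fun x => -(M * deriv (w · t) x) * Real.exp (-(M * w x t)),
    fun x => (-(M * deriv (deriv (w · t)) x) + (M * deriv (w · t) x) ^ 2) *
      Real.exp (-(M * w x t)), fun x hx => ?_⟩
  obtain ⟨hwx, hwxx, hwt⟩ := hw x hx t ht
  have hψx := (hwx.hasDerivAt.const_mul M).neg.exp
  refine ⟨hψx.congr_deriv (by simp only [Pi.neg_apply]; ring), ?_,
    (hwt.const_mul M).neg.exp.congr_deriv (by simp only [Pi.neg_apply]; ring)⟩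
  exact ((hwxx.hasDerivAt.const_mul M).neg.mul hψx).congr_deriv (by simp only [Pi.neg_apply]; ring)

theorem mul_abs_sub_le_exp_mul_abs_exp_neg_sub {M C a b : ℝ} (hM : 0 ≤ M) (ha : |a| ≤ C)
    (hb : |b| ≤ C) :
    M * |a - b| ≤ Real.exp (M * C) * |Real.exp (-(M * a)) - Real.exp (-(M * b))| := by
  wlog hab : b ≤ a generalizing a b
  · simpa only [abs_sub_comm] using this hb ha (le_of_not_ge hab)
  have hMab : 0 ≤ M * (a - b) := mul_nonneg hM (sub_nonneg.2 hab)
  have hdiff : Real.exp (-(M * b)) - Real.exp (-(M * a)) =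
      Real.exp (-(M * a)) * (Real.exp (M * (a - b)) - 1) := by
    rw [mul_sub, ← Real.exp_add]; ring_nf
  have hscale : 1 ≤ Real.exp (M * C) * Real.exp (-(M * a)) := by
    rw [← Real.exp_add, Real.one_le_exp_iff]
    nlinarith [le_abs_self a]
  have hexp := Real.add_one_le_exp (M * (a - b))
  rw [abs_sub_comm (Real.exp _), hdiff, abs_of_nonneg (sub_nonneg.2 hab),
    abs_of_nonneg (mul_nonneg (Real.exp_pos _).le (by linarith)), ← mul_assoc]
  calc M * (a - b) ≤ Real.exp (M * C) * Real.exp (-(M * a)) * (M * (a - b)) :=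
        le_mul_of_one_le_left hMab hscale
    _ ≤ _ := by gcongr; linarith

theorem tendstoUniformlyOn_of_dist_le {ι β α : Type*} [PseudoMetricSpace α]
    {F : ι → β → α} {f : β → α} {p : Filter ι} {s : Set β} {b : ι → ℝ}
    (hb : Tendsto b p (𝓝 0))
    (h : ∀ᶠ i in p, ∀ x ∈ s, dist (f x) (F i x) ≤ b i) : TendstoUniformlyOn F f p s :=
  Metric.tendstoUniformlyOn_iff.2 fun _ hε =>
    (h.and (hb.eventually (gt_mem_nhds hε))).mono fun _ hi x hx => (hi.1 x hx).trans_lt hi.2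

theorem mul_abs_sub_le_of_halfLine {M C δ₀ l₀ : ℝ} {w : ℝ → ℝ → ℝ} (hM : 0 ≤ M)
    (hC : ∀ x t : ℝ, x ≤ l₀ → 0 ≤ t → |w x t| ≤ C)
    (hwcont : ContinuousOn (fun q : ℝ × ℝ => w q.1 q.2) (Iic l₀ ×ˢ Ioi 0))
    (hwpde : ∀ x < l₀, ∀ t > (0:ℝ),
      DifferentiableAt ℝ (fun y => w y t) x ∧
      DifferentiableAt ℝ (deriv fun y => w y t) x ∧
      HasDerivAt (fun τ => w x τ)
        (deriv (deriv fun y => w y t) x - M * (deriv (fun y => w y t) x) ^ 2) t)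
    (hwbc : ∀ t > (0:ℝ), w l₀ t = δ₀) :
    ∀ x ≤ l₀, ∀ t ≥ 1, M * |w x t - δ₀| ≤
      Real.exp (M * C) * (Real.exp (M * C) / scaledErf 1 * ((l₀ + 1 - x) / √t)) := by
  have hδ₀C : |δ₀| ≤ C := hwbc 1 one_pos ▸ hC l₀ 1 le_rfl zero_le_one
  have hψC : ∀ a, |a| ≤ C → Real.exp (-(M * a)) ≤ Real.exp (M * C) := fun a ha =>
    Real.exp_le_exp.2 (by nlinarith [neg_abs_le a])
  set u : ℝ → ℝ → ℝ := fun x t => Real.exp (-(M * w x t)) - Real.exp (-(M * δ₀))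
  have hu : IsHeatSolutionOn u (Iio l₀) (Ioi 1) :=
    ((isHeatSolutionOn_exp_neg_mul hwpde).sub (isHeatSolutionOn_const _ _ _)).mono subset_rfl
      (Ioi_subset_Ioi zero_le_one)
  have hdecay := hu.abs_le_of_halfLine
    ((((hwcont.mono (prod_mono subset_rfl (Ici_subset_Ioi.2 one_pos))).const_smul M).neg.rexp).sub
      continuousOn_const)
    (fun x hx t ht => abs_sub_le_of_nonneg_of_le (Real.exp_pos _).le
      (hψC _ (hC x t hx (by linarith))) (Real.exp_pos _).le (hψC _ hδ₀C))
    (fun t ht => by simp [u, hwbc t (by linarith)])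
  intro x hx t ht
  exact (mul_abs_sub_le_exp_mul_abs_exp_neg_sub hM (hC x t hx (by linarith)) hδ₀C).trans
    (mul_le_mul_of_nonneg_left (hdecay x hx t ht) (Real.exp_pos _).le)

theorem halfline_convergence_general
    (M δ₀ l₀ : ℝ) (hM : 0 < M)
    (w : ℝ → ℝ → ℝ)
    (hwbdd : ∃ C, ∀ x t : ℝ, x ≤ l₀ → 0 ≤ t → |w x t| ≤ C)
    (hwcont : ContinuousOn (fun q : ℝ × ℝ => w q.1 q.2) (Set.Iic l₀ ×ˢ Set.Ioi 0))
    (hwpde : ∀ x < l₀, ∀ t > (0:ℝ),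
      DifferentiableAt ℝ (fun y => w y t) x ∧
      DifferentiableAt ℝ (deriv fun y => w y t) x ∧
      HasDerivAt (fun τ => w x τ)
        (deriv (deriv fun y => w y t) x - M * (deriv (fun y => w y t) x) ^ 2) t)
    (hwbc : ∀ t > (0:ℝ), w l₀ t = δ₀) :
    ∀ K ⊆ Set.Iic l₀, IsCompact K →
      TendstoUniformlyOn (fun (t : ℝ) (x : ℝ) => w x t) (fun _ => δ₀) atTop K := by
  intro K hK hKc
  obtain ⟨C, hC⟩ := hwbdd
  obtain ⟨L, hL⟩ := hKc.bddBelow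
  have hbound := mul_abs_sub_le_of_halfLine hM.le hC hwcont hwpde hwbc
  set E := Real.exp (M * C)
  refine tendstoUniformlyOn_of_dist_le
    (b := fun t => E * (E / scaledErf 1 * (l₀ + 1 - L)) / M / √t)
    (tendsto_const_nhds.div_atTop Real.tendsto_sqrt_atTop) ?_
  filter_upwards [eventually_ge_atTop 1] with t ht x hx
  have hst : 0 < √t := Real.sqrt_pos.2 (by linarith)
  rw [dist_comm, Real.dist_eq, div_div, le_div_iff₀ (mul_pos hM hst)]
  calc |w x t - δ₀| * (M * √t) = M * |w x t - δ₀| * √t := by ring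
    _ ≤ E * (E / scaledErf 1 * ((l₀ + 1 - L) / √t)) * √t := by
      refine mul_le_mul_of_nonneg_right ((hbound x (hK hx) t ht).trans ?_) hst.le
      have := scaledErf_one_pos
      gcongr
      exact hL hx
    _ = E * (E / scaledErf 1 * (l₀ + 1 - L)) := by field_simp

theorem halfline_convergence
    (M δ₀ l₀ : ℝ) (hM : 0 < M) (hδ₀ : 0 < δ₀)
    (w₀ : ℝ → ℝ) (hw₀bdd : ∃ C, ∀ x ≤ l₀, |w₀ x| ≤ C)
    (hw₀zero : ∃ l : ℝ, ∀ x ≤ l, w₀ x = 0)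
    (w : ℝ → ℝ → ℝ)
    (hwbdd : ∃ C, ∀ x t : ℝ, x ≤ l₀ → 0 ≤ t → |w x t| ≤ C)
    (hwcont : ContinuousOn (fun q : ℝ × ℝ => w q.1 q.2) (Set.Iic l₀ ×ˢ Set.Ioi 0))
    (hwpde : ∀ x < l₀, ∀ t > (0:ℝ),
      DifferentiableAt ℝ (fun y => w y t) x ∧
      DifferentiableAt ℝ (deriv fun y => w y t) x ∧
      HasDerivAt (fun τ => w x τ)
        (deriv (deriv fun y => w y t) x - M * (deriv (fun y => w y t) x) ^ 2) t)
    (hwbc : ∀ t > (0:ℝ), w l₀ t = δ₀)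
    (hwic : ∀ᵐ x ∂(volume.restrict (Set.Iic l₀)),
      Tendsto (fun t => w x t) (nhdsWithin 0 (Set.Ioi 0)) (nhds (w₀ x))) :
    ∀ K ⊆ Set.Iic l₀, IsCompact K →
      TendstoUniformlyOn (fun (t : ℝ) (x : ℝ) => w x t) (fun _ => δ₀) atTop K :=
  halfline_convergence_general M δ₀ l₀ hM w hwbdd hwcont hwpde hwbc
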